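/- Assume σ₂(W) < 1. Let f : ℝ^{m×n} → ℝ be convex and differentiable with gradient ∇f, and suppose x* ∈ ℝ^{m×n} minimizes f over the subspace {x ∈ ℝ^{m×n} : Ux = 0}. Then there exists λ* ∈ ℝ^{m×n} such that ∇f(x*) + Uλ* = 0 and ‖λ*‖_F ≤ ‖∇f(x*)‖_F / √(1 − σ₂(W)). -/

import Mathlib

open scoped RealInnerProductSpace

/-- Left multiplication of `x ∈ ℝ^{m×n}` by an `m × m` matrix `A`,
with `ℝ^{m×n}` viewed as a Euclidean space with the Frobenius inner product. -/
noncomputable def matApply {m n : ℕ} (A : Matrix (Fin m) (Fin m) ℝ)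
    (x : EuclideanSpace ℝ (Fin m × Fin n)) : EuclideanSpace ℝ (Fin m × Fin n) :=
  WithLp.toLp 2 (fun p : Fin m × Fin n => ∑ k : Fin m, A p.1 k * x (k, p.2))

/-!
At a minimiser over `ker U` the gradient is orthogonal to `ker U`; as `U` is symmetric,
`(ker U)ᗮ = range U = range U²`, so `-∇f(x*) = U (U ν)` for some `ν`. Take `λ* = U ν`: every
column of `λ*` lies in `range U ⟂ 1` (because `U 1 = 0`), so the spectral gap of `W` on `1ᗮ`
gives `(1 - σ) ‖λ*‖² ≤ ⟪λ*, (I - W) λ*⟫ = ‖U λ*‖² = ‖∇f(x*)‖²`.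
-/

theorem HasGradientAt.mem_orthogonal_of_forall_le_add {E : Type*} [NormedAddCommGroup E]
    [InnerProductSpace ℝ E] [CompleteSpace E] {f : E → ℝ} {g x : E} (K : Submodule ℝ E)
    (hf : HasGradientAt f g x) (hmin : ∀ d ∈ K, f x ≤ f (x + d)) : g ∈ Kᗮ := by
  have hφ : HasFDerivAt (fun d : K => f (x + d))
      ((InnerProductSpace.toDual ℝ E g : E →L[ℝ] ℝ).comp K.subtypeL) 0 :=
    HasFDerivAt.comp (0 : K) (by simpa using hf.hasFDerivAt) (K.subtypeL.hasFDerivAt.const_add x)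
  have hlocmin : IsLocalMin (fun d : K => f (x + d)) 0 :=
    Filter.Eventually.of_forall fun d => by simpa using hmin d d.2
  have hzero := hlocmin.hasFDerivAt_eq_zero hφ
  rw [Submodule.mem_orthogonal']
  intro d hd
  simpa using congr($hzero ⟨d, hd⟩)

theorem LinearMap.IsSymmetric.exists_apply_apply_eq_of_mem_orthogonal_ker {𝕜 E : Type*}
    [RCLike 𝕜] [NormedAddCommGroup E] [InnerProductSpace 𝕜 E] [FiniteDimensional 𝕜 E]
    {T : E →ₗ[𝕜] E} (hT : T.IsSymmetric) {g : E} (hg : g ∈ (LinearMap.ker T)ᗮ) :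
    ∃ v, T (T v) = g := by
  rw [LinearMap.orthogonal_ker, ← LinearMap.range_adjoint_comp_self, hT.adjoint_eq] at hg
  exact hg

namespace Matrix

variable {ι R : Type*} [Fintype ι] {A : Matrix ι ι R}

theorem IsSymm.mulVec_dotProduct [CommSemiring R] (hA : A.IsSymm) (v w : ι → R) :
    A *ᵥ v ⬝ᵥ w = v ⬝ᵥ A *ᵥ w := by
  rw [dotProduct_mulVec, ← vecMul_transpose, hA.eq]

theorem IsSymm.mulVec_dotProduct_mulVec [CommSemiring R] (hA : A.IsSymm) (v w : ι → R) :
    A *ᵥ v ⬝ᵥ A *ᵥ w = v ⬝ᵥ (A * A) *ᵥ w := by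
  rw [hA.mulVec_dotProduct, mulVec_mulVec]

theorem IsSymm.mulVec_eq_zero_of_mul_self_mulVec_eq_zero [CommRing R] [LinearOrder R]
    [IsStrictOrderedRing R] (hA : A.IsSymm) {v : ι → R} (hv : (A * A) *ᵥ v = 0) :
    A *ᵥ v = 0 := by
  rw [← dotProduct_self_eq_zero, hA.mulVec_dotProduct_mulVec, hv, dotProduct_zero]

theorem IsSymm.sum_mulVec_eq_zero [CommSemiring R] (hA : A.IsSymm) (hA1 : A *ᵥ 1 = 0)
    (v : ι → R) : ∑ i, (A *ᵥ v) i = 0 := by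
  rw [← one_dotProduct, ← hA.mulVec_dotProduct, hA1, zero_dotProduct]

end Matrix

section matApply

open Matrix

variable {m n : ℕ}

def matCol (x : EuclideanSpace ℝ (Fin m × Fin n)) (j : Fin n) : Fin m → ℝ :=
  fun i => x (i, j)

theorem matCol_matApply (A : Matrix (Fin m) (Fin m) ℝ) (x : EuclideanSpace ℝ (Fin m × Fin n))
    (j : Fin n) : matCol (matApply A x) j = A *ᵥ matCol x j :=
  rfl

theorem inner_eq_sum_matCol (x y : EuclideanSpace ℝ (Fin m × Fin n)) :
    ⟪x, y⟫ = ∑ j, matCol x j ⬝ᵥ matCol y j := by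
  rw [EuclideanSpace.inner_eq_star_dotProduct, dotProduct, Fintype.sum_prod_type, Finset.sum_comm]
  simp [matCol, dotProduct, mul_comm]

theorem norm_sq_eq_sum_matCol (x : EuclideanSpace ℝ (Fin m × Fin n)) :
    ‖x‖ ^ 2 = ∑ j, matCol x j ⬝ᵥ matCol x j := by
  rw [← real_inner_self_eq_norm_sq, inner_eq_sum_matCol]

noncomputable def matApplyLinearMap (A : Matrix (Fin m) (Fin m) ℝ) :
    EuclideanSpace ℝ (Fin m × Fin n) →ₗ[ℝ] EuclideanSpace ℝ (Fin m × Fin n) where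
  toFun := matApply A
  map_add' x y := by ext; simp [matApply, mul_add, Finset.sum_add_distrib]
  map_smul' c x := by ext; simp [matApply, Finset.mul_sum, mul_left_comm]

theorem matApplyLinearMap_apply (A : Matrix (Fin m) (Fin m) ℝ)
    (x : EuclideanSpace ℝ (Fin m × Fin n)) : matApplyLinearMap A x = matApply A x :=
  rfl

theorem isSymmetric_matApplyLinearMap {A : Matrix (Fin m) (Fin m) ℝ} (hA : A.IsSymm) :
    (matApplyLinearMap (n := n) A).IsSymmetric := by
  intro x y
  simp only [inner_eq_sum_matCol, matApplyLinearMap_apply, matCol_matApply]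
  exact Finset.sum_congr rfl fun j _ => hA.mulVec_dotProduct _ _

theorem sub_mul_norm_sq_le_norm_matApply_sq {W U : Matrix (Fin m) (Fin m) ℝ} {σ : ℝ}
    (hU : U.IsSymm) (hUU : U * U = 1 - W)
    (hσ : ∀ v : Fin m → ℝ, ∑ i, v i = 0 → v ⬝ᵥ W *ᵥ v ≤ σ * v ⬝ᵥ v)
    {x : EuclideanSpace ℝ (Fin m × Fin n)} (hx : ∀ j, ∑ i, x (i, j) = 0) :
    (1 - σ) * ‖x‖ ^ 2 ≤ ‖matApply U x‖ ^ 2 := by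
  rw [norm_sq_eq_sum_matCol, norm_sq_eq_sum_matCol, Finset.mul_sum]
  refine Finset.sum_le_sum fun j _ => ?_
  have hWx := hσ (matCol x j) (hx j)
  rw [matCol_matApply, hU.mulVec_dotProduct_mulVec, hUU, sub_mulVec, one_mulVec, dotProduct_sub]
  linarith

end matApply

theorem stmt10_general (m n : ℕ)
    (W U : Matrix (Fin m) (Fin m) ℝ) (σ : ℝ)
    (hW1 : W.mulVec (fun _ => (1 : ℝ)) = fun _ => (1 : ℝ))
    (hUpsd : U.PosSemidef) (hUU : U * U = 1 - W)
    -- `σ` is (an upper bound for) the second largest eigenvalue of `W`: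
    -- it bounds the Rayleigh quotient of `W` on the orthogonal complement of `1`
    (hσ : ∀ v : Fin m → ℝ, (∑ i, v i) = 0 →
      dotProduct v (W.mulVec v) ≤ σ * dotProduct v v)
    (hσ1 : σ < 1)
    (f : EuclideanSpace ℝ (Fin m × Fin n) → ℝ)
    (gf : EuclideanSpace ℝ (Fin m × Fin n) → EuclideanSpace ℝ (Fin m × Fin n))
    (hgrad : ∀ x, HasGradientAt f (gf x) x)
    (xs : EuclideanSpace ℝ (Fin m × Fin n))
    (hxs : matApply U xs = 0)
    (hmin : ∀ y, matApply U y = 0 → f xs ≤ f y) :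
    ∃ lam : EuclideanSpace ℝ (Fin m × Fin n),
      gf xs + matApply U lam = 0 ∧ ‖lam‖ ≤ ‖gf xs‖ / Real.sqrt (1 - σ) := by
  have hU : U.IsSymm := hUpsd.isHermitian
  set T := matApplyLinearMap (n := n) U
  have hU1 : U.mulVec 1 = 0 := hU.mulVec_eq_zero_of_mul_self_mulVec_eq_zero <| by
    rw [hUU, Matrix.sub_mulVec, Matrix.one_mulVec]
    exact sub_eq_zero.mpr hW1.symm
  have hgrad_orth : -gf xs ∈ (LinearMap.ker T)ᗮ := by
    refine Submodule.neg_mem _ <|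
      (hgrad xs).mem_orthogonal_of_forall_le_add _ fun d hd => hmin _ ?_
    rw [← matApplyLinearMap_apply, map_add, matApplyLinearMap_apply, hxs, zero_add]
    exact hd
  obtain ⟨v, hv⟩ := (isSymmetric_matApplyLinearMap hU).exists_apply_apply_eq_of_mem_orthogonal_ker
    hgrad_orth
  refine ⟨T v, by rw [← matApplyLinearMap_apply, hv, add_neg_cancel], ?_⟩
  have hbound : (1 - σ) * ‖T v‖ ^ 2 ≤ ‖gf xs‖ ^ 2 := by
    rw [← norm_neg (gf xs), ← hv]
    exact sub_mul_norm_sq_le_norm_matApply_sq hU hUU hσ fun j =>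
      hU.sum_mulVec_eq_zero hU1 (matCol v j)
  rw [le_div_iff₀ (Real.sqrt_pos.mpr (sub_pos.mpr hσ1))]
  refine (pow_le_pow_iff_left₀ (by positivity) (norm_nonneg _) two_ne_zero).mp ?_
  rw [mul_pow, Real.sq_sqrt (sub_nonneg.mpr hσ1.le)]
  linarith

theorem stmt10 (m n : ℕ) (hm : 0 < m)
    (W U : Matrix (Fin m) (Fin m) ℝ) (σ : ℝ)
    (hWsymm : W.IsSymm)
    (hW1 : W.mulVec (fun _ => (1 : ℝ)) = fun _ => (1 : ℝ))
    (hWpsd : W.PosSemidef) (hIW : (1 - W).PosSemidef)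
    (hUpsd : U.PosSemidef) (hUU : U * U = 1 - W)
    -- `σ` is (an upper bound for) the second largest eigenvalue of `W`:
    -- it bounds the Rayleigh quotient of `W` on the orthogonal complement of `1`
    (hσ : ∀ v : Fin m → ℝ, (∑ i, v i) = 0 →
      dotProduct v (W.mulVec v) ≤ σ * dotProduct v v)
    (hσ1 : σ < 1)
    (f : EuclideanSpace ℝ (Fin m × Fin n) → ℝ)
    (gf : EuclideanSpace ℝ (Fin m × Fin n) → EuclideanSpace ℝ (Fin m × Fin n))
    (hconv : ConvexOn ℝ Set.univ f)
    (hgrad : ∀ x, HasGradientAt f (gf x) x)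
    (xs : EuclideanSpace ℝ (Fin m × Fin n))
    (hxs : matApply U xs = 0)
    (hmin : ∀ y, matApply U y = 0 → f xs ≤ f y) :
    ∃ lam : EuclideanSpace ℝ (Fin m × Fin n),
      gf xs + matApply U lam = 0 ∧ ‖lam‖ ≤ ‖gf xs‖ / Real.sqrt (1 - σ) :=
  stmt10_general m n W U σ hW1 hUpsd hUU hσ hσ1 f gf hgrad xs hxs hmin
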